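/- Let q, q', ℓ be nonzero complex numbers and let Ã_{q,q',ℓ} be the q-linked algebra WITHOUT the determinant relations. Then the chiral quantum determinant det = ad − q⁻¹bc and the antichiral quantum determinant det' = a'd' − q'b'c' are both central in Ã_{q,q',ℓ}; in particular det·det' = det'·det. -/

import Mathlib

/-!
Within each sector the Manin relations make the quantum determinant commute with the four
generators of that sector; this is the classical computation, using the two expressions
`a d - p b c = d a - p⁻¹ b c` of the determinant. Across sectors, a generator `x` of the other
sector either commutes with both factors of `a d` (resp. `b c`) or skew-commutes with them with
the same factor `ℓ`, once on each side, so it commutes with the products `a d` and `b c` and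
hence with the determinant. Being central, `det` commutes in particular with `det'`.
-/

noncomputable section

open FreeAlgebra

/-- The relations of the q-linked algebra (without the determinant relations):
generators `a = ι ℂ 0, b = ι ℂ 1, c = ι ℂ 2, d = ι ℂ 3` (chiral sector, Manin
relations with parameter `q`), `a' = ι ℂ 4, b' = ι ℂ 5, c' = ι ℂ 6, d' = ι ℂ 7`
(antichiral sector, Manin relations with parameter `1/q'`), the link relations and
the commutation relations between the two sectors. -/
inductive LinkedRel (q q' ℓ : ℂ) :
    FreeAlgebra ℂ (Fin 8) → FreeAlgebra ℂ (Fin 8) → Prop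
  | ab : LinkedRel q q' ℓ (ι ℂ 0 * ι ℂ 1) (q⁻¹ • (ι ℂ 1 * ι ℂ 0))
  | ac : LinkedRel q q' ℓ (ι ℂ 0 * ι ℂ 2) (q⁻¹ • (ι ℂ 2 * ι ℂ 0))
  | bd : LinkedRel q q' ℓ (ι ℂ 1 * ι ℂ 3) (q⁻¹ • (ι ℂ 3 * ι ℂ 1))
  | cd : LinkedRel q q' ℓ (ι ℂ 2 * ι ℂ 3) (q⁻¹ • (ι ℂ 3 * ι ℂ 2))
  | bc : LinkedRel q q' ℓ (ι ℂ 1 * ι ℂ 2) (ι ℂ 2 * ι ℂ 1)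
  | ad : LinkedRel q q' ℓ (ι ℂ 0 * ι ℂ 3 - ι ℂ 3 * ι ℂ 0) ((q⁻¹ - q) • (ι ℂ 1 * ι ℂ 2))
  | ab' : LinkedRel q q' ℓ (ι ℂ 4 * ι ℂ 5) (q' • (ι ℂ 5 * ι ℂ 4))
  | ac' : LinkedRel q q' ℓ (ι ℂ 4 * ι ℂ 6) (q' • (ι ℂ 6 * ι ℂ 4))
  | bd' : LinkedRel q q' ℓ (ι ℂ 5 * ι ℂ 7) (q' • (ι ℂ 7 * ι ℂ 5))
  | cd' : LinkedRel q q' ℓ (ι ℂ 6 * ι ℂ 7) (q' • (ι ℂ 7 * ι ℂ 6))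
  | bc' : LinkedRel q q' ℓ (ι ℂ 5 * ι ℂ 6) (ι ℂ 6 * ι ℂ 5)
  | ad' : LinkedRel q q' ℓ (ι ℂ 4 * ι ℂ 7 - ι ℂ 7 * ι ℂ 4) ((q' - q'⁻¹) • (ι ℂ 5 * ι ℂ 6))
  | link₁ : LinkedRel q q' ℓ (ι ℂ 5 * ι ℂ 0) (ℓ • (ι ℂ 0 * ι ℂ 5))
  | link₂ : LinkedRel q q' ℓ (ι ℂ 0 * ι ℂ 6) (ℓ • (ι ℂ 6 * ι ℂ 0))
  | link₃ : LinkedRel q q' ℓ (ι ℂ 4 * ι ℂ 1) (ℓ • (ι ℂ 1 * ι ℂ 4))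
  | link₄ : LinkedRel q q' ℓ (ι ℂ 1 * ι ℂ 7) (ℓ • (ι ℂ 7 * ι ℂ 1))
  | link₅ : LinkedRel q q' ℓ (ι ℂ 2 * ι ℂ 4) (ℓ • (ι ℂ 4 * ι ℂ 2))
  | link₆ : LinkedRel q q' ℓ (ι ℂ 7 * ι ℂ 2) (ℓ • (ι ℂ 2 * ι ℂ 7))
  | link₇ : LinkedRel q q' ℓ (ι ℂ 3 * ι ℂ 5) (ℓ • (ι ℂ 5 * ι ℂ 3))
  | link₈ : LinkedRel q q' ℓ (ι ℂ 6 * ι ℂ 3) (ℓ • (ι ℂ 3 * ι ℂ 6))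
  | comm₁ : LinkedRel q q' ℓ (ι ℂ 0 * ι ℂ 4) (ι ℂ 4 * ι ℂ 0)
  | comm₂ : LinkedRel q q' ℓ (ι ℂ 0 * ι ℂ 7) (ι ℂ 7 * ι ℂ 0)
  | comm₃ : LinkedRel q q' ℓ (ι ℂ 1 * ι ℂ 5) (ι ℂ 5 * ι ℂ 1)
  | comm₄ : LinkedRel q q' ℓ (ι ℂ 1 * ι ℂ 6) (ι ℂ 6 * ι ℂ 1)
  | comm₅ : LinkedRel q q' ℓ (ι ℂ 2 * ι ℂ 5) (ι ℂ 5 * ι ℂ 2)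
  | comm₆ : LinkedRel q q' ℓ (ι ℂ 2 * ι ℂ 6) (ι ℂ 6 * ι ℂ 2)
  | comm₇ : LinkedRel q q' ℓ (ι ℂ 3 * ι ℂ 4) (ι ℂ 4 * ι ℂ 3)
  | comm₈ : LinkedRel q q' ℓ (ι ℂ 3 * ι ℂ 7) (ι ℂ 7 * ι ℂ 3)

/-- The q-linked algebra `Ã_{q,q',ℓ}` without the determinant relations. -/
abbrev Atilde (q q' ℓ : ℂ) := RingQuot (LinkedRel q q' ℓ)

/-- The images of the eight generators. -/
def gen (q q' ℓ : ℂ) (i : Fin 8) : Atilde q q' ℓ :=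
  RingQuot.mkAlgHom ℂ (LinkedRel q q' ℓ) (ι ℂ i)


section QuantumDet

variable {k R : Type*} [Field k] [Ring R] [Algebra k R]

theorem commute_mul_of_smul_comm {x u v : R} {r : k} (hu : x * u = r • (u * x))
    (hv : v * x = r • (x * v)) : Commute x (u * v) :=
  calc x * (u * v) = r • (u * x * v) := by rw [← mul_assoc, hu, smul_mul_assoc]
    _ = u * v * x := by rw [mul_assoc, mul_assoc, hv, mul_smul_comm]

theorem mul_eq_inv_smul_of_mul_eq_smul {x y : R} {r : k} (hr : r ≠ 0)
    (h : x * y = r • (y * x)) : y * x = r⁻¹ • (x * y) :=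
  (eq_inv_smul_iff₀ hr).mpr h.symm

theorem commute_mul_of_smul_comm' {x u v : R} {r : k} (hr : r ≠ 0)
    (hu : u * x = r • (x * u)) (hv : x * v = r • (v * x)) : Commute x (u * v) :=
  commute_mul_of_smul_comm (mul_eq_inv_smul_of_mul_eq_smul hr hu)
    (mul_eq_inv_smul_of_mul_eq_smul hr hv)

def quantumDet (p : k) (a b c d : R) : R :=
  a * d - p • (b * c)

theorem Commute.quantumDet_right {x a b c d : R} (had : Commute x (a * d))
    (hbc : Commute x (b * c)) (p : k) : Commute x (quantumDet p a b c d) :=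
  had.sub_right (hbc.smul_right p)

-- The paper's Manin relations with parameter `q` are `IsManin q⁻¹`.
structure IsManin (p : k) (a b c d : R) : Prop where
  ab : a * b = p • (b * a)
  ac : a * c = p • (c * a)
  bd : b * d = p • (d * b)
  cd : c * d = p • (d * c)
  bc : b * c = c * b
  ad : a * d - d * a = (p - p⁻¹) • (b * c)

namespace IsManin

variable {p : k} {a b c d : R}

theorem quantumDet_eq (h : IsManin p a b c d) :
    quantumDet p a b c d = d * a - p⁻¹ • (b * c) := by
  rw [quantumDet, ← sub_add_cancel (a * d) (d * a), h.ad]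
  module

theorem quantumDet_commute_a (h : IsManin p a b c d) (hp : p ≠ 0) :
    Commute (quantumDet p a b c d) a := by
  have habc : a * (b * c) = (p * p) • (b * (c * a)) := by
    rw [← mul_assoc, h.ab, smul_mul_assoc, mul_assoc, h.ac, mul_smul_comm, smul_smul]
  calc quantumDet p a b c d * a = a * (d * a) - p • (b * (c * a)) := by
        simp only [quantumDet, sub_mul, smul_mul_assoc, mul_assoc]
    _ = a * quantumDet p a b c d := by
        rw [h.quantumDet_eq, mul_sub, mul_smul_comm, habc, smul_smul,
          inv_mul_cancel_left₀ hp]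

theorem quantumDet_commute_b (h : IsManin p a b c d) (hp : p ≠ 0) :
    Commute (quantumDet p a b c d) b :=
  (Commute.quantumDet_right
    (commute_mul_of_smul_comm (mul_eq_inv_smul_of_mul_eq_smul hp h.ab)
      (mul_eq_inv_smul_of_mul_eq_smul hp h.bd))
    ((Commute.refl b).mul_right h.bc) p).symm

theorem quantumDet_commute_c (h : IsManin p a b c d) (hp : p ≠ 0) :
    Commute (quantumDet p a b c d) c :=
  (Commute.quantumDet_right
    (commute_mul_of_smul_comm (mul_eq_inv_smul_of_mul_eq_smul hp h.ac)
      (mul_eq_inv_smul_of_mul_eq_smul hp h.cd))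
    ((Commute.symm h.bc).mul_right (Commute.refl c)) p).symm

theorem quantumDet_commute_d (h : IsManin p a b c d) (hp : p ≠ 0) :
    Commute (quantumDet p a b c d) d := by
  have hbcd : b * (c * d) = (p * p) • (d * (b * c)) := by
    rw [h.cd, mul_smul_comm, ← mul_assoc, h.bd, smul_mul_assoc, smul_smul, mul_assoc]
  calc quantumDet p a b c d * d = d * (a * d) - p⁻¹ • (b * (c * d)) := by
        simp only [h.quantumDet_eq, sub_mul, smul_mul_assoc, mul_assoc]
    _ = d * quantumDet p a b c d := by
        rw [quantumDet, mul_sub, mul_smul_comm, hbcd, smul_smul,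
          inv_mul_cancel_left₀ hp]

end IsManin

end QuantumDet

namespace LinkedRel

variable {q q' ℓ : ℂ}

theorem gen_mul_gen {i j i' j' : Fin 8} {s : ℂ}
    (h : LinkedRel q q' ℓ (ι ℂ i * ι ℂ j) (s • (ι ℂ i' * ι ℂ j'))) :
    gen q q' ℓ i * gen q q' ℓ j = s • (gen q q' ℓ i' * gen q q' ℓ j') := by
  simpa only [gen, map_mul, map_smul] using RingQuot.mkAlgHom_rel ℂ h

theorem commute_gen {i j : Fin 8} (h : LinkedRel q q' ℓ (ι ℂ i * ι ℂ j) (ι ℂ j * ι ℂ i)) :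
    Commute (gen q q' ℓ i) (gen q q' ℓ j) :=
  (map_mul _ _ _).symm.trans ((RingQuot.mkAlgHom_rel ℂ h).trans (map_mul _ _ _))

end LinkedRel

open LinkedRel

theorem isManin_chiral (q q' ℓ : ℂ) :
    IsManin q⁻¹ (gen q q' ℓ 0) (gen q q' ℓ 1) (gen q q' ℓ 2) (gen q q' ℓ 3) where
  ab := gen_mul_gen ab
  ac := gen_mul_gen ac
  bd := gen_mul_gen bd
  cd := gen_mul_gen cd
  bc := commute_gen bc
  ad := by
    simpa only [gen, inv_inv, map_sub, map_mul, map_smul] using RingQuot.mkAlgHom_rel ℂ ad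

theorem isManin_antichiral (q q' ℓ : ℂ) :
    IsManin q' (gen q q' ℓ 4) (gen q q' ℓ 5) (gen q q' ℓ 6) (gen q q' ℓ 7) where
  ab := gen_mul_gen ab'
  ac := gen_mul_gen ac'
  bd := gen_mul_gen bd'
  cd := gen_mul_gen cd'
  bc := commute_gen bc'
  ad := by simpa only [gen, map_sub, map_mul, map_smul] using RingQuot.mkAlgHom_rel ℂ ad'

variable {q q' ℓ : ℂ}

theorem chiralDet_commute_gen (hq : q ≠ 0) (hℓ : ℓ ≠ 0) (i : Fin 8) :
    Commute (quantumDet q⁻¹ (gen q q' ℓ 0) (gen q q' ℓ 1) (gen q q' ℓ 2) (gen q q' ℓ 3))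
      (gen q q' ℓ i) := by
  have h := isManin_chiral q q' ℓ
  have hq_inv := inv_ne_zero hq
  fin_cases i
  · exact h.quantumDet_commute_a hq_inv
  · exact h.quantumDet_commute_b hq_inv
  · exact h.quantumDet_commute_c hq_inv
  · exact h.quantumDet_commute_d hq_inv
  all_goals refine (Commute.quantumDet_right ?_ ?_ _).symm
  · exact (commute_gen comm₁).symm.mul_right (commute_gen comm₇).symm
  · exact commute_mul_of_smul_comm (gen_mul_gen link₃) (gen_mul_gen link₅)
  · exact commute_mul_of_smul_comm (gen_mul_gen link₁) (gen_mul_gen link₇)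
  · exact (commute_gen comm₃).symm.mul_right (commute_gen comm₅).symm
  · exact commute_mul_of_smul_comm' hℓ (gen_mul_gen link₂) (gen_mul_gen link₈)
  · exact (commute_gen comm₄).symm.mul_right (commute_gen comm₆).symm
  · exact (commute_gen comm₂).symm.mul_right (commute_gen comm₈).symm
  · exact commute_mul_of_smul_comm' hℓ (gen_mul_gen link₄) (gen_mul_gen link₆)

theorem antichiralDet_commute_gen (hq' : q' ≠ 0) (hℓ : ℓ ≠ 0) (i : Fin 8) :
    Commute (quantumDet q' (gen q q' ℓ 4) (gen q q' ℓ 5) (gen q q' ℓ 6) (gen q q' ℓ 7))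
      (gen q q' ℓ i) := by
  have h := isManin_antichiral q q' ℓ
  fin_cases i
  rotate_left 4
  · exact h.quantumDet_commute_a hq'
  · exact h.quantumDet_commute_b hq'
  · exact h.quantumDet_commute_c hq'
  · exact h.quantumDet_commute_d hq'
  all_goals refine (Commute.quantumDet_right ?_ ?_ _).symm
  · exact (commute_gen comm₁).mul_right (commute_gen comm₂)
  · exact commute_mul_of_smul_comm' hℓ (gen_mul_gen link₁) (gen_mul_gen link₂)
  · exact commute_mul_of_smul_comm' hℓ (gen_mul_gen link₃) (gen_mul_gen link₄)
  · exact (commute_gen comm₃).mul_right (commute_gen comm₄)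
  · exact commute_mul_of_smul_comm (gen_mul_gen link₅) (gen_mul_gen link₆)
  · exact (commute_gen comm₅).mul_right (commute_gen comm₆)
  · exact (commute_gen comm₇).mul_right (commute_gen comm₈)
  · exact commute_mul_of_smul_comm (gen_mul_gen link₇) (gen_mul_gen link₈)

/-- The chiral quantum determinant `det = a d − q⁻¹ b c` and the antichiral quantum
determinant `det' = a' d' − q' b' c'` are central in `Ã_{q,q',ℓ}`; in particular
they commute with each other. -/
theorem determinants_central (q q' ℓ : ℂ) (hq : q ≠ 0) (hq' : q' ≠ 0) (hℓ : ℓ ≠ 0) :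
    let g := gen q q' ℓ
    let Det := g 0 * g 3 - q⁻¹ • (g 1 * g 2)
    let Det' := g 4 * g 7 - q' • (g 5 * g 6)
    (∀ i : Fin 8, Det * g i = g i * Det) ∧
    (∀ i : Fin 8, Det' * g i = g i * Det') ∧
    Det * Det' = Det' * Det := by
  intro g Det Det'
  have hDet : ∀ i, Commute Det (g i) := chiralDet_commute_gen hq hℓ
  have hDet' : ∀ i, Commute Det' (g i) := antichiralDet_commute_gen hq' hℓ
  exact ⟨hDet, hDet',
    ((hDet 4).mul_right (hDet 7)).sub_right (((hDet 5).mul_right (hDet 6)).smul_right q')⟩
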